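/- Let T ≥ 1 be a horizon, s a state, and s^a a state adjacent to s. If the optimal offloading decision of s satisfies L*_T(s) ≥ 1, then the optimal offloading decision of s^a is L*_T(s^a) = L*_T(s) + 1. -/
import Mathlib


open Finset

/-- System parameters: offloading cost, penalty cost, AMA probability,
local-processing probability, and arrival probabilities. -/
structure Params where
  Co : ℝ
  Cp : ℝ
  pa : ℝ
  mu : ℝ
  p : ℕ → ℝ

variable {N : ℕ}

/-- Partial sum `S_j(s) = ∑_{i=1}^j n_i` (components of `s` are 0-indexed). -/
def S (s : Fin N → ℕ) (j : ℕ) : ℕ :=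
  ∑ i ∈ Finset.univ.filter fun i : Fin N => (i : ℕ) < j, s i

/-- Total number of tasks `|s|`. -/
def tot (s : Fin N → ℕ) : ℕ := S s N

/-- The state obtained by offloading the `L` most imminent tasks of `s`:
`(s̄_L)_i = max(S_i(s) − L, 0) − max(S_{i−1}(s) − L, 0)` (truncated ℕ-subtraction). -/
def offload (s : Fin N → ℕ) (L : ℕ) : Fin N → ℕ :=
  fun i => (S s ((i : ℕ) + 1) - L) - (S s (i : ℕ) - L)

/-- Deadline shifting: `shift(s) = (n_2, …, n_N, 0)`. -/
def shift (s : Fin N → ℕ) : Fin N → ℕ :=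
  fun i => if h : (i : ℕ) + 1 < N then s ⟨(i : ℕ) + 1, h⟩ else 0

/-- Arrival vector `a_k`: the `k`-th standard unit vector for `1 ≤ k ≤ N`, zero for `k = 0`. -/
def avec (k : ℕ) : Fin N → ℕ := fun i => if (i : ℕ) + 1 = k then 1 else 0

/-- Local processing: remove one task of smallest deadline (identity on the zero state). -/
def proc (s : Fin N → ℕ) : Fin N → ℕ :=
  fun i => if s i ≠ 0 ∧ ∀ j : Fin N, j < i → s j = 0 then s i - 1 else s i

/-- `s''_{Lk} = shift(s̄_L) + a_k`. -/
def sdd (s : Fin N → ℕ) (L k : ℕ) : Fin N → ℕ :=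
  fun i => shift (offload s L) i + avec k i

/-- `s'_{Lk} = proc(s''_{Lk})`. -/
def sd (s : Fin N → ℕ) (L k : ℕ) : Fin N → ℕ := proc (sdd s L k)

/-- Instantaneous cost with the AMA: `𝒞^A(s,L) = C_o·L + C_p·max(n_1 − L, 0)`. -/
def costA (P : Params) (s : Fin N → ℕ) (L : ℕ) : ℝ :=
  P.Co * L + P.Cp * ((S s 1 - L : ℕ) : ℝ)

/-- Instantaneous cost without the AMA: `𝒞^Ā(s) = C_p·n_1`. -/
def costNA (P : Params) (s : Fin N → ℕ) : ℝ := P.Cp * (S s 1 : ℕ)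

/-- Expected instantaneous cost `𝒞(s,L)`. -/
def cost (P : Params) (s : Fin N → ℕ) (L : ℕ) : ℝ :=
  P.pa * costA P s L + (1 - P.pa) * costNA P s

/-- The dynamic-programming minimization, given the future-cost function `G`. -/
noncomputable def JofG (P : Params) (G : (Fin N → ℕ) → ℕ → ℝ) (s : Fin N → ℕ) : ℝ :=
  (Finset.range (tot s + 1)).inf' (Finset.nonempty_range_iff.mpr (Nat.succ_ne_zero _))
    fun L => cost P s L + P.pa * G s L + (1 - P.pa) * G s 0

/-- `G^A_T(s,L)`, defined by recursion on the horizon `T`. -/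
noncomputable def GA (P : Params) : ℕ → (Fin N → ℕ) → ℕ → ℝ
  | 0, _, _ => 0
  | T + 1, s, L =>
      P.mu * ∑ k ∈ Finset.range (N + 1), P.p k * JofG P (GA P T) (sd s L k)
        + (1 - P.mu) * ∑ k ∈ Finset.range (N + 1), P.p k * JofG P (GA P T) (sdd s L k)

/-- `J_T(s)` for horizon `T ≥ 1`. -/
noncomputable def J (P : Params) (T : ℕ) (s : Fin N → ℕ) : ℝ := JofG P (GA P (T - 1)) s

/-- `J^A_T(s,L) = 𝒞^A(s,L) + G^A_{T−1}(s,L)`. -/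
noncomputable def JA (P : Params) (T : ℕ) (s : Fin N → ℕ) (L : ℕ) : ℝ :=
  costA P s L + GA P (T - 1) s L

/-- `J^A_T(s) = min_{0 ≤ L ≤ |s|} J^A_T(s,L)`. -/
noncomputable def JAmin (P : Params) (T : ℕ) (s : Fin N → ℕ) : ℝ :=
  (Finset.range (tot s + 1)).inf' (Finset.nonempty_range_iff.mpr (Nat.succ_ne_zero _))
    (JA P T s)

/-- `J^Ā_T(s) = 𝒞^Ā(s) + G^A_{T−1}(s,0)`. -/
noncomputable def JNA (P : Params) (T : ℕ) (s : Fin N → ℕ) : ℝ :=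
  costNA P s + GA P (T - 1) s 0

/-- The optimal offloading decision: the smallest minimizer of `L ↦ J^A_T(s,L)`
over `{0,…,|s|}`. -/
noncomputable def Lstar (P : Params) (T : ℕ) (s : Fin N → ℕ) : ℕ :=
  sInf {L | L ≤ tot s ∧ ∀ L' ≤ tot s, JA P T s L ≤ JA P T s L'}

/-- The smallest deadline `d(s)` carried by a task of `s` (1-indexed). -/
noncomputable def dmin (s : Fin N → ℕ) : ℕ := sInf {j | 0 < S s j}

/-- `sa` is adjacent to `s`. -/
def Adjacent (s sa : Fin N → ℕ) : Prop :=
  (s ≠ 0 ∧ ∃ j, 1 ≤ j ∧ j ≤ dmin s ∧ sa = s + avec j) ∨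
    (s = 0 ∧ ∃ j, 1 ≤ j ∧ j ≤ N ∧ sa = avec j)

/-- `L_g`: the number of excessive tasks, `max_{1 ≤ j ≤ M} max(S_j(s) − (j−1), 0)`. -/
def Lg (s : Fin N → ℕ) (M : ℕ) : ℕ := (Finset.Icc 1 M).sup fun j => S s j - (j - 1)

/-- `Γ_j = ∑_{i=1}^j γ_i` for the parameters `γ` of Definition 2
(`γ_1 = 0`, `γ_j = min(n_j, j−1−∑_{i<j} γ_i)` for `2 ≤ j ≤ M`, `γ_j = 0` for `j > M`). -/
def Gam (s : Fin N → ℕ) (M : ℕ) : ℕ → ℕ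
  | 0 => 0
  | j + 1 =>
      if 2 ≤ j + 1 ∧ j + 1 ≤ M then
        Gam s M j + min (S s (j + 1) - S s j) (j - Gam s M j)
      else Gam s M j

/-- The lean state of `s`: `n^ℓ_i = max(γ_i, n^r_i)` where `s^r = s̄_{L_g}`. -/
def leanState (s : Fin N → ℕ) (M : ℕ) : Fin N → ℕ :=
  fun i => max (Gam s M ((i : ℕ) + 1) - Gam s M (i : ℕ)) (offload s (Lg s M) i)

/-- `F(s,L) = J^Ā_T(s̄_L) + L·C_o`. -/
noncomputable def F (P : Params) (T : ℕ) (s : Fin N → ℕ) (L : ℕ) : ℝ :=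
  JNA P T (offload s L) + L * P.Co


/-! ### Auxiliary development: value functions in cumulative coordinates -/

section AuxDev

/-- Cumulative-coordinate cone: nondecreasing with plateau from index `N-1` on. -/
def ConeX (N : ℕ) (x : ℕ → ℕ) : Prop :=
  Monotone x ∧ ∀ i, N - 1 ≤ i → x i = x (N - 1)

/-- Step vectors: 0/1-valued, nondecreasing, plateau. -/
def StepX (N : ℕ) (w : ℕ → ℕ) : Prop :=
  (∀ i, w i ≤ 1) ∧ Monotone w ∧ ∀ i, N - 1 ≤ i → w i = w (N - 1)

/-- Offloading `M` tasks in cumulative coordinates. -/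
def subV (x : ℕ → ℕ) (M : ℕ) : ℕ → ℕ := fun i => x i - M

/-- Deadline shift in cumulative coordinates. -/
def shV (x : ℕ → ℕ) : ℕ → ℕ := fun i => x (i + 1) - x 0

/-- Cumulative coordinates of the arrival vector `a_k`. -/
def cvv (k : ℕ) : ℕ → ℕ := fun i => if 1 ≤ k ∧ k ≤ i + 1 then 1 else 0

/-- Discrete upper midpoint. -/
def mupV (x y : ℕ → ℕ) : ℕ → ℕ := fun i => (x i + y i + 1) / 2

/-- Discrete lower midpoint. -/
def mdnV (x y : ℕ → ℕ) : ℕ → ℕ := fun i => (x i + y i) / 2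

/-- One-step expected future cost operator (cumulative coordinates). -/
noncomputable def GbodyX (N : ℕ) (P : Params) (W : (ℕ → ℕ) → ℝ) (z : ℕ → ℕ) : ℝ :=
  ∑ k ∈ Finset.range (N + 1),
    P.p k * (P.mu * W (subV (z + cvv k) 1) + (1 - P.mu) * W (z + cvv k))

/-- `J^Ā`-type value in cumulative coordinates. -/
noncomputable def VbodyX (N : ℕ) (P : Params) (W : (ℕ → ℕ) → ℝ) (x : ℕ → ℕ) : ℝ :=
  P.Cp * x 0 + GbodyX N P W (shV x)

/-- Optimal offloading value in cumulative coordinates. -/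
noncomputable def gminX (N : ℕ) (P : Params) (g : (ℕ → ℕ) → ℝ) (y : ℕ → ℕ) : ℝ :=
  (Finset.range (y N + 1)).inf' Finset.nonempty_range_add_one
    fun M => P.Co * M + g (subV y M)

/-- The value functions `W_t` in cumulative coordinates. -/
noncomputable def gWX (N : ℕ) (P : Params) : ℕ → (ℕ → ℕ) → ℝ
  | 0 => fun _ => 0
  | t + 1 => fun y =>
      P.pa * gminX N P (VbodyX N P (gWX N P t)) y
        + (1 - P.pa) * VbodyX N P (gWX N P t) y

/-- The key closed class of functions: monotone, discrete-midpoint (L♮) convex,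
`C_p`-Lipschitz in step directions. -/
structure GoodX (N : ℕ) (P : Params) (g : (ℕ → ℕ) → ℝ) : Prop where
  mono : ∀ ⦃x y : ℕ → ℕ⦄, ConeX N x → ConeX N y → x ≤ y → g x ≤ g y
  mid : ∀ ⦃x y : ℕ → ℕ⦄, ConeX N x → ConeX N y →
    g (mupV x y) + g (mdnV x y) ≤ g x + g y
  lip : ∀ ⦃x w : ℕ → ℕ⦄, ConeX N x → StepX N w → g (x + w) ≤ g x + P.Cp

/-- Standing hypotheses on the parameters. -/
structure NiceP (N : ℕ) (P : Params) : Prop where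
  npos : 0 < N
  co : 0 ≤ P.Co
  cp : 0 ≤ P.Cp
  pa0 : 0 ≤ P.pa
  pa1 : P.pa ≤ 1
  mu0 : 0 ≤ P.mu
  mu1 : P.mu ≤ 1
  p0 : ∀ k, k ≤ N → 0 ≤ P.p k
  psum : ∑ k ∈ Finset.range (N + 1), P.p k = 1

/-! #### Cone and step bookkeeping -/

lemma coneX_le_apply {N : ℕ} {x : ℕ → ℕ} (hx : ConeX N x) (i : ℕ) : x i ≤ x N := by
  rcases le_or_gt i N with h | h
  · exact hx.1 h
  · have h1 : x i = x (N - 1) := hx.2 i (by omega)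
    have h2 : x N = x (N - 1) := by
      rcases Nat.eq_zero_or_pos N with h0 | h0
      · simp [h0]
      · exact hx.2 N (by omega)
    omega

lemma coneX_subV {N : ℕ} {x : ℕ → ℕ} (hx : ConeX N x) (M : ℕ) : ConeX N (subV x M) := by
  constructor
  · intro i j hij
    simp only [subV]
    have := hx.1 hij
    omega
  · intro i hi
    simp only [subV, hx.2 i hi]

lemma coneX_shV {N : ℕ} {x : ℕ → ℕ} (hx : ConeX N x) : ConeX N (shV x) := by
  constructor
  · intro i j hij
    simp only [shV]
    have := hx.1 (Nat.add_le_add_right hij 1)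
    omega
  · intro i hi
    simp only [shV]
    have h1 : x (i + 1) = x (N - 1) := hx.2 _ (by omega)
    have h2 : x (N - 1 + 1) = x (N - 1) := hx.2 _ (by omega)
    rw [h1, h2]

lemma stepX_cvv {N k : ℕ} (hk : k ≤ N) : StepX N (cvv k) := by
  refine ⟨fun i => by simp only [cvv]; split <;> omega, ?_, ?_⟩
  · intro i j hij
    simp only [cvv]
    split <;> split <;> omega
  · intro i hi
    simp only [cvv]
    split <;> split <;> omega

lemma coneX_add_step {N : ℕ} {x w : ℕ → ℕ} (hx : ConeX N x) (hw : StepX N w) :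
    ConeX N (x + w) := by
  constructor
  · intro i j hij
    have h1 := hx.1 hij
    have h2 := hw.2.1 hij
    simp only [Pi.add_apply]
    omega
  · intro i hi
    simp only [Pi.add_apply, hx.2 i hi, hw.2.2 i hi]

lemma coneX_mup {N : ℕ} {x y : ℕ → ℕ} (hx : ConeX N x) (hy : ConeX N y) :
    ConeX N (mupV x y) := by
  constructor
  · intro i j hij
    have h1 := hx.1 hij
    have h2 := hy.1 hij
    simp only [mupV]
    omega
  · intro i hi
    simp only [mupV, hx.2 i hi, hy.2 i hi]

lemma coneX_mdn {N : ℕ} {x y : ℕ → ℕ} (hx : ConeX N x) (hy : ConeX N y) :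
    ConeX N (mdnV x y) := by
  constructor
  · intro i j hij
    have h1 := hx.1 hij
    have h2 := hy.1 hij
    simp only [mdnV]
    omega
  · intro i hi
    simp only [mdnV, hx.2 i hi, hy.2 i hi]

lemma stepX_total {N : ℕ} {w w' : ℕ → ℕ} (hw : StepX N w) (hw' : StepX N w') :
    w ≤ w' ∨ w' ≤ w := by
  by_cases h : ∀ i, w i ≤ w' i
  · exact Or.inl h
  · push_neg at h
    obtain ⟨i, hi⟩ := h
    right
    intro j
    show w' j ≤ w j
    rcases le_total j i with hji | hji
    · have h1 := hw'.2.1 hji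
      have h2 := hw.1 j
      have h3 := hw.1 i
      omega
    · have h1 := hw.2.1 hji
      have h2 := hw'.1 j
      have h3 := hw.1 i
      omega

/-- Subtraction interacts with step addition: `(x+w) − M = (x − M) + w'` for a step `w'`. -/
lemma sub_step {N : ℕ} {x w : ℕ → ℕ} (hx : ConeX N x) (hw : StepX N w) (M : ℕ) :
    ∃ w' : ℕ → ℕ, StepX N w' ∧ subV (x + w) M = subV x M + w' := by
  refine ⟨fun i => (x i + w i - M) - (x i - M), ⟨?_, ?_, ?_⟩, ?_⟩
  · intro i
    dsimp only
    have := hw.1 i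
    omega
  · intro i j hij
    dsimp only
    have h1 := hx.1 hij
    have h2 := hw.2.1 hij
    have h3 := hw.1 i
    have h4 := hw.1 j
    omega
  · intro i hi
    dsimp only
    rw [hx.2 i hi, hw.2.2 i hi]
  · funext i
    simp only [subV, Pi.add_apply]
    have := hw.1 i
    omega

/-- The indicator step `x − M = (x − (M+1)) + w`. -/
lemma sub_succ_step {N : ℕ} {x : ℕ → ℕ} (hx : ConeX N x) (M : ℕ) :
    ∃ w' : ℕ → ℕ, StepX N w' ∧ (∀ i, (w' i = 1 ↔ M + 1 ≤ x i)) ∧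
      subV x M = subV x (M + 1) + w' := by
  refine ⟨fun i => if M + 1 ≤ x i then 1 else 0, ⟨?_, ?_, ?_⟩, ?_, ?_⟩
  · intro i; dsimp only; split <;> omega
  · intro i j hij
    dsimp only
    have := hx.1 hij
    split <;> split <;> omega
  · intro i hi
    dsimp only
    rw [hx.2 i hi]
  · intro i; dsimp only; split <;> simp_all
  · funext i
    simp only [subV, Pi.add_apply]
    split <;> omega

/-! #### Generic consequences of `GoodX` -/

/-- Supermodularity along comparable steps. -/
lemma GoodX.sup {N : ℕ} {P : Params} {g : (ℕ → ℕ) → ℝ} (hg : GoodX N P g)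
    {x w w' : ℕ → ℕ} (hx : ConeX N x) (hw : StepX N w) (hw' : StepX N w')
    (hle : w' ≤ w) :
    g (x + w) + g (x + w') ≤ g (x + w + w') + g x := by
  have hmid := hg.mid (x := x + w + w') (y := x)
    (coneX_add_step (coneX_add_step hx hw) hw') hx
  have e1 : mupV (x + w + w') x = x + w := by
    funext i
    have h1 := hw.1 i
    have h2 := hw'.1 i
    have h3 : w' i ≤ w i := hle i
    simp only [mupV, Pi.add_apply]
    omega
  have e2 : mdnV (x + w + w') x = x + w' := by
    funext i
    have h1 := hw.1 i
    have h2 := hw'.1 i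
    have h3 : w' i ≤ w i := hle i
    simp only [mdnV, Pi.add_apply]
    omega
  rw [e1, e2] at hmid
  linarith

/-- Marginals of a step decrease along the offloading chain. -/
lemma GoodX.marg_chain {N : ℕ} {P : Params} {g : (ℕ → ℕ) → ℝ} (hg : GoodX N P g)
    {x w : ℕ → ℕ} (hx : ConeX N x) (hw : StepX N w) (L : ℕ) :
    g (subV x L + w) + g x ≤ g (x + w) + g (subV x L) := by
  induction L with
  | zero =>
      have : subV x 0 = x := by funext i; simp [subV]
      rw [this]
  | succ L ih =>
      obtain ⟨w', hw', hw'1, hsub⟩ := sub_succ_step hx L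
      -- subV x L = subV x (L+1) + w'
      have hconeL1 : ConeX N (subV x (L + 1)) := coneX_subV hx _
      have key : g (subV x (L + 1) + w) + g (subV x L) ≤
          g (subV x L + w) + g (subV x (L + 1)) := by
        rcases stepX_total hw hw' with hle | hle
        · have := hg.sup (x := subV x (L + 1)) hconeL1 hw' hw hle
          have e : subV x (L + 1) + w' + w = subV x L + w := by rw [← hsub]
          rw [e, ← hsub] at this
          linarith
        · have := hg.sup (x := subV x (L + 1)) hconeL1 hw hw' hle
          have e : subV x (L + 1) + w + w' = subV x L + w := by
            rw [add_right_comm, ← hsub]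
          rw [e, ← hsub] at this
          linarith
      linarith

/-- Two-point domination by midpoints. -/
lemma GoodX.pair_le {N : ℕ} {P : Params} {g : (ℕ → ℕ) → ℝ} (hg : GoodX N P g)
    {a b p q : ℕ → ℕ} (hca : ConeX N a) (hcb : ConeX N b) (hcp : ConeX N p)
    (hcq : ConeX N q) (ha : a ≤ mupV p q) (hb : b ≤ mdnV p q) :
    g a + g b ≤ g p + g q := by
  have h1 := hg.mono hca (coneX_mup hcp hcq) ha
  have h2 := hg.mono hcb (coneX_mdn hcp hcq) hb
  have h3 := hg.mid hcp hcq
  linarith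

/-! #### Monotone path lemma -/

/-- Elementary increment directions within the cone. -/
def deltaX (N i : ℕ) : ℕ → ℕ := fun j =>
  if j = i ∨ (N - 1 ≤ j ∧ N - 1 ≤ i) then 1 else 0

lemma mono_of_units {N : ℕ} (hN : 0 < N) (g : (ℕ → ℕ) → ℝ)
    (h : ∀ x i, i ≤ N - 1 → ConeX N x → ConeX N (x + deltaX N i) →
      g x ≤ g (x + deltaX N i)) :
    ∀ ⦃x y : ℕ → ℕ⦄, ConeX N x → ConeX N y → x ≤ y → g x ≤ g y := by
  have key : ∀ n (x y : ℕ → ℕ), ConeX N x → ConeX N y → x ≤ y →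
      (∑ j ∈ Finset.range N, (y j - x j)) ≤ n → g x ≤ g y := by
    intro n
    induction n with
    | zero =>
        intro x y hx hy hxy hsum
        have hz : ∀ j ∈ Finset.range N, y j - x j = 0 := by
          intro j hj
          have h0 : (∑ j ∈ Finset.range N, (y j - x j)) = 0 := Nat.le_zero.mp hsum
          exact (Finset.sum_eq_zero_iff).mp h0 j hj
        have hxyeq : x = y := by
          funext j
          rcases le_or_gt (N - 1) j with hj | hj
          · have e1 := hx.2 j hj
            have e2 := hy.2 j hj
            have e3 : y (N - 1) - x (N - 1) = 0 :=
              hz (N - 1) (Finset.mem_range.mpr (by omega))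
            have e4 : x (N - 1) ≤ y (N - 1) := hxy (N - 1)
            omega
          · have e3 : y j - x j = 0 := hz j (Finset.mem_range.mpr (by omega))
            have e4 : x j ≤ y j := hxy j
            omega
        rw [hxyeq]
    | succ n ih =>
        intro x y hx hy hxy hsum
        by_cases hxy2 : x = y
        · rw [hxy2]
        · have hTne : ((Finset.range N).filter fun j => x j < y j).Nonempty := by
            by_contra hc
            rw [Finset.not_nonempty_iff_eq_empty, Finset.filter_eq_empty_iff] at hc
            apply hxy2
            funext j
            rcases le_or_gt (N - 1) j with hj | hj
            · have e1 := hx.2 j hj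
              have e2 := hy.2 j hj
              have e3 : ¬ x (N - 1) < y (N - 1) :=
                hc (Finset.mem_range.mpr (by omega))
              have e4 : x (N - 1) ≤ y (N - 1) := hxy (N - 1)
              omega
            · have e3 : ¬ x j < y j := hc (Finset.mem_range.mpr (by omega))
              have e4 : x j ≤ y j := hxy j
              omega
          set T := (Finset.range N).filter fun j => x j < y j with hT
          have him : T.max' hTne ∈ T := T.max'_mem hTne
          set i := T.max' hTne with hidef
          have hiN : i < N := Finset.mem_range.mp (Finset.mem_filter.mp him).1
          have hilt : x i < y i := (Finset.mem_filter.mp him).2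
          have hmaxeq : ∀ j, i < j → j < N → x j = y j := by
            intro j h1 h2
            by_contra hne
            have hxyj : x j ≤ y j := hxy j
            have hjT : j ∈ T := by
              refine Finset.mem_filter.mpr ⟨Finset.mem_range.mpr h2, ?_⟩
              omega
            have := T.le_max' j hjT
            omega
          have hconex' : ConeX N (x + deltaX N i) := by
            constructor
            · intro a b hab
              have m1 : x a ≤ x b := hx.1 hab
              simp only [Pi.add_apply, deltaX]
              rcases le_or_gt (N - 1) i with hiB | hiB
              · split_ifs with c1 c2 <;> omega
              · have hs : x i + 1 ≤ x (i + 1) := by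
                  have e1 : x (i + 1) = y (i + 1) := hmaxeq (i + 1) (by omega) (by omega)
                  have e2 : y i ≤ y (i + 1) := hy.1 (by omega)
                  omega
                split_ifs with c1 c2
                · omega
                · rcases c1 with rfl | hc
                  · have c2' := not_or.mp c2
                    have hb : i + 1 ≤ b := by omega
                    have m2 : x (i + 1) ≤ x b := hx.1 hb
                    omega
                  · omega
                · omega
                · omega
            · intro j hj
              simp only [Pi.add_apply, deltaX, hx.2 j hj]
              split_ifs with c1 c2 <;> omega
          have hxle : x + deltaX N i ≤ y := by
            intro j
            show x j + deltaX N i j ≤ y j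
            simp only [deltaX]
            split_ifs with c1
            · rcases c1 with rfl | ⟨h1, h2⟩
              · omega
              · have e1 : x j = x (N - 1) := hx.2 j h1
                have e2 : y j = y (N - 1) := hy.2 j h1
                have e3 : x i = x (N - 1) := hx.2 i h2
                have e4 : y i = y (N - 1) := hy.2 i h2
                omega
            · have m : x j ≤ y j := hxy j
              omega
          have hmeas : (∑ j ∈ Finset.range N, (y j - (x + deltaX N i) j)) ≤ n := by
            have hlt : (∑ j ∈ Finset.range N, (y j - (x + deltaX N i) j)) <
                ∑ j ∈ Finset.range N, (y j - x j) := by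
              apply Finset.sum_lt_sum
              · intro j hj
                simp only [Pi.add_apply]
                omega
              · refine ⟨i, Finset.mem_range.mpr hiN, ?_⟩
                have hd : deltaX N i i = 1 := by
                  simp [deltaX]
                simp only [Pi.add_apply, hd]
                omega
            omega
          have step1 : g x ≤ g (x + deltaX N i) := h x i (by omega) hx hconex'
          have step2 : g (x + deltaX N i) ≤ g y := ih _ y hconex' hy hxle hmeas
          linarith
  intro x y hx hy hxy
  exact key _ x y hx hy hxy le_rfl

/-! #### Closure of the class under the DP operators -/


lemma Gbody_mono {N : ℕ} {P : Params} (hP : NiceP N P) {W : (ℕ → ℕ) → ℝ}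
    (hW : GoodX N P W) {z z' : ℕ → ℕ} (hz : ConeX N z) (hz' : ConeX N z')
    (hzz : z ≤ z') : GbodyX N P W z ≤ GbodyX N P W z' := by
  refine Finset.sum_le_sum ?_
  intro k hk
  have hkN : k ≤ N := by have := Finset.mem_range.mp hk; omega
  have hcv := stepX_cvv (N := N) hkN
  have c1 : ConeX N (z + cvv k) := coneX_add_step hz hcv
  have c1' : ConeX N (z' + cvv k) := coneX_add_step hz' hcv
  have hle : z + cvv k ≤ z' + cvv k := by
    intro i
    show z i + cvv k i ≤ z' i + cvv k i
    have hzi : z i ≤ z' i := hzz i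
    omega
  have hleS : subV (z + cvv k) 1 ≤ subV (z' + cvv k) 1 := by
    intro i
    show (z + cvv k) i - 1 ≤ (z' + cvv k) i - 1
    have h2 : (z + cvv k) i ≤ (z' + cvv k) i := hle i
    omega
  have m1 : W (subV (z + cvv k) 1) ≤ W (subV (z' + cvv k) 1) :=
    hW.mono (coneX_subV c1 1) (coneX_subV c1' 1) hleS
  have m2 : W (z + cvv k) ≤ W (z' + cvv k) := hW.mono c1 c1' hle
  have t1 : P.mu * W (subV (z + cvv k) 1) ≤ P.mu * W (subV (z' + cvv k) 1) :=
    mul_le_mul_of_nonneg_left m1 hP.mu0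
  have t2 : (1 - P.mu) * W (z + cvv k) ≤ (1 - P.mu) * W (z' + cvv k) :=
    mul_le_mul_of_nonneg_left m2 (by linarith [hP.mu1])
  exact mul_le_mul_of_nonneg_left (by linarith) (hP.p0 k hkN)

lemma Gbody_pair {N : ℕ} {P : Params} (hP : NiceP N P) {W : (ℕ → ℕ) → ℝ}
    (hW : GoodX N P W) {p q : ℕ → ℕ} (hp : ConeX N p) (hq : ConeX N q) :
    GbodyX N P W (mupV p q) + GbodyX N P W (mdnV p q) ≤
      GbodyX N P W p + GbodyX N P W q := by
  rw [GbodyX, GbodyX, GbodyX, GbodyX, ← Finset.sum_add_distrib, ← Finset.sum_add_distrib]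
  refine Finset.sum_le_sum ?_
  intro k hk
  have hkN : k ≤ N := by have := Finset.mem_range.mp hk; omega
  have hcv := stepX_cvv (N := N) hkN
  have cP : ConeX N (p + cvv k) := coneX_add_step hp hcv
  have cQ : ConeX N (q + cvv k) := coneX_add_step hq hcv
  have eup : mupV p q + cvv k = mupV (p + cvv k) (q + cvv k) := by
    funext i
    show (p i + q i + 1) / 2 + cvv k i = (p i + cvv k i + (q i + cvv k i) + 1) / 2
    have := hcv.1 i
    omega
  have edn : mdnV p q + cvv k = mdnV (p + cvv k) (q + cvv k) := by
    funext i
    show (p i + q i) / 2 + cvv k i = (p i + cvv k i + (q i + cvv k i)) / 2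
    have := hcv.1 i
    omega
  have m2 : W (mupV p q + cvv k) + W (mdnV p q + cvv k) ≤
      W (p + cvv k) + W (q + cvv k) := by
    rw [eup, edn]; exact hW.mid cP cQ
  have m1 : W (subV (mupV p q + cvv k) 1) + W (subV (mdnV p q + cvv k) 1) ≤
      W (subV (p + cvv k) 1) + W (subV (q + cvv k) 1) := by
    rw [eup, edn]
    refine hW.pair_le (coneX_subV (coneX_mup cP cQ) 1) (coneX_subV (coneX_mdn cP cQ) 1)
      (coneX_subV cP 1) (coneX_subV cQ 1) ?_ ?_
    · intro i
      show ((p + cvv k) i + (q + cvv k) i + 1) / 2 - 1 ≤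
        ((p + cvv k) i - 1 + ((q + cvv k) i - 1) + 1) / 2
      omega
    · intro i
      show ((p + cvv k) i + (q + cvv k) i) / 2 - 1 ≤
        ((p + cvv k) i - 1 + ((q + cvv k) i - 1)) / 2
      omega
  have t1 : P.mu * (W (subV (mupV p q + cvv k) 1) + W (subV (mdnV p q + cvv k) 1)) ≤
      P.mu * (W (subV (p + cvv k) 1) + W (subV (q + cvv k) 1)) :=
    mul_le_mul_of_nonneg_left m1 hP.mu0
  have t2 : (1 - P.mu) * (W (mupV p q + cvv k) + W (mdnV p q + cvv k)) ≤
      (1 - P.mu) * (W (p + cvv k) + W (q + cvv k)) :=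
    mul_le_mul_of_nonneg_left m2 (by linarith [hP.mu1])
  have := hP.p0 k hkN
  nlinarith [t1, t2]

lemma Gbody_plusCp {N : ℕ} {P : Params} (hP : NiceP N P) {W : (ℕ → ℕ) → ℝ}
    {A A' B B' : ℕ → ℕ → ℕ}
    (hA : ∀ k ≤ N, W (A' k) ≤ W (A k) + P.Cp)
    (hB : ∀ k ≤ N, W (B' k) ≤ W (B k) + P.Cp) :
    ∑ k ∈ Finset.range (N + 1), P.p k * (P.mu * W (A' k) + (1 - P.mu) * W (B' k)) ≤
      (∑ k ∈ Finset.range (N + 1), P.p k * (P.mu * W (A k) + (1 - P.mu) * W (B k)))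
        + P.Cp := by
  have step : ∀ k ∈ Finset.range (N + 1),
      P.p k * (P.mu * W (A' k) + (1 - P.mu) * W (B' k)) ≤
      P.p k * (P.mu * W (A k) + (1 - P.mu) * W (B k)) + P.p k * P.Cp := by
    intro k hk
    have hkN : k ≤ N := by have := Finset.mem_range.mp hk; omega
    have t1 : P.mu * W (A' k) ≤ P.mu * (W (A k) + P.Cp) :=
      mul_le_mul_of_nonneg_left (hA k hkN) hP.mu0
    have t2 : (1 - P.mu) * W (B' k) ≤ (1 - P.mu) * (W (B k) + P.Cp) :=
      mul_le_mul_of_nonneg_left (hB k hkN) (by linarith [hP.mu1])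
    have hpk := hP.p0 k hkN
    nlinarith [t1, t2]
  calc ∑ k ∈ Finset.range (N + 1), P.p k * (P.mu * W (A' k) + (1 - P.mu) * W (B' k))
      ≤ ∑ k ∈ Finset.range (N + 1),
          (P.p k * (P.mu * W (A k) + (1 - P.mu) * W (B k)) + P.p k * P.Cp) :=
        Finset.sum_le_sum step
    _ = (∑ k ∈ Finset.range (N + 1), P.p k * (P.mu * W (A k) + (1 - P.mu) * W (B k)))
        + (∑ k ∈ Finset.range (N + 1), P.p k) * P.Cp := by
        rw [Finset.sum_add_distrib, Finset.sum_mul]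
    _ = _ := by rw [hP.psum, one_mul]

lemma Gbody_lip {N : ℕ} {P : Params} (hP : NiceP N P) {W : (ℕ → ℕ) → ℝ}
    (hW : GoodX N P W) {z w : ℕ → ℕ} (hz : ConeX N z) (hw : StepX N w) :
    GbodyX N P W (z + w) ≤ GbodyX N P W z + P.Cp := by
  rw [GbodyX, GbodyX]
  refine Gbody_plusCp hP ?_ ?_
  · intro k hkN
    have hcv := stepX_cvv (N := N) hkN
    have cZ : ConeX N (z + cvv k) := coneX_add_step hz hcv
    have e1 : z + w + cvv k = (z + cvv k) + w := by
      funext i; show z i + w i + cvv k i = z i + cvv k i + w i; omega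
    obtain ⟨w', hw', hsub⟩ := sub_step cZ hw 1
    rw [e1, hsub]
    exact hW.lip (coneX_subV cZ 1) hw'
  · intro k hkN
    have hcv := stepX_cvv (N := N) hkN
    have cZ : ConeX N (z + cvv k) := coneX_add_step hz hcv
    have e1 : z + w + cvv k = (z + cvv k) + w := by
      funext i; show z i + w i + cvv k i = z i + cvv k i + w i; omega
    rw [e1]
    exact hW.lip cZ hw

lemma Gbody_sub1 {N : ℕ} {P : Params} (hP : NiceP N P) {W : (ℕ → ℕ) → ℝ}
    (hW : GoodX N P W) {z : ℕ → ℕ} (hz : ConeX N z) :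
    GbodyX N P W z ≤ GbodyX N P W (subV z 1) + P.Cp := by
  have hw0 : StepX N (fun j => z j - (z j - 1)) := by
    refine ⟨fun i => by dsimp only; omega, ?_, ?_⟩
    · intro i j hij
      dsimp only
      have := hz.1 hij
      omega
    · intro i hi
      dsimp only
      rw [hz.2 i hi]
  have hzrec : z = subV z 1 + (fun j => z j - (z j - 1)) := by
    funext i
    show z i = z i - 1 + (z i - (z i - 1))
    omega
  calc GbodyX N P W z = GbodyX N P W (subV z 1 + fun j => z j - (z j - 1)) := by
        rw [← hzrec]
    _ ≤ GbodyX N P W (subV z 1) + P.Cp := Gbody_lip hP hW (coneX_subV hz 1) hw0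

lemma goodX_gmin {N : ℕ} {P : Params} (hP : NiceP N P) {g : (ℕ → ℕ) → ℝ}
    (hg : GoodX N P g) : GoodX N P (gminX N P g) := by
  have hinfle : ∀ (y : ℕ → ℕ) (M : ℕ), M ≤ y N →
      gminX N P g y ≤ P.Co * M + g (subV y M) := by
    intro y M hM
    exact Finset.inf'_le _ (Finset.mem_range.mpr (by omega))
  constructor
  · -- monotone
    intro x y hx hy hxy
    obtain ⟨My, hMy, hEy⟩ := Finset.exists_mem_eq_inf'
      (Finset.nonempty_range_add_one (n := y N)) (fun M => P.Co * M + g (subV y M))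
    have hMyN : My ≤ y N := by
      have := Finset.mem_range.mp hMy; omega
    have h1 : gminX N P g x ≤ P.Co * (min My (x N)) + g (subV x (min My (x N))) :=
      hinfle x _ (min_le_right _ _)
    have h2 : g (subV x (min My (x N))) ≤ g (subV y My) := by
      refine hg.mono (coneX_subV hx _) (coneX_subV hy _) ?_
      intro i
      show x i - min My (x N) ≤ y i - My
      have hxi : x i ≤ x N := coneX_le_apply hx i
      have hxyi : x i ≤ y i := hxy i
      omega
    have h3 : (P.Co : ℝ) * (min My (x N)) ≤ P.Co * My := by
      have : ((min My (x N) : ℕ) : ℝ) ≤ (My : ℕ) := by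
        exact_mod_cast min_le_left _ _
      exact mul_le_mul_of_nonneg_left this hP.co
    have hEy' : gminX N P g y = P.Co * My + g (subV y My) := hEy
    rw [hEy']
    linarith
  · -- midpoint
    intro x y hx hy
    obtain ⟨M1, hM1, hE1⟩ := Finset.exists_mem_eq_inf'
      (Finset.nonempty_range_add_one (n := x N)) (fun M => P.Co * M + g (subV x M))
    obtain ⟨M2, hM2, hE2⟩ := Finset.exists_mem_eq_inf'
      (Finset.nonempty_range_add_one (n := y N)) (fun M => P.Co * M + g (subV y M))
    have hM1N : M1 ≤ x N := by have := Finset.mem_range.mp hM1; omega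
    have hM2N : M2 ≤ y N := by have := Finset.mem_range.mp hM2; omega
    have hup : gminX N P g (mupV x y) ≤
        P.Co * (((M1 + M2 + 1) / 2 : ℕ) : ℝ) + g (subV (mupV x y) ((M1 + M2 + 1) / 2)) := by
      refine hinfle _ _ ?_
      show (M1 + M2 + 1) / 2 ≤ (x N + y N + 1) / 2
      omega
    have hdn : gminX N P g (mdnV x y) ≤
        P.Co * (((M1 + M2) / 2 : ℕ) : ℝ) + g (subV (mdnV x y) ((M1 + M2) / 2)) := by
      refine hinfle _ _ ?_
      show (M1 + M2) / 2 ≤ (x N + y N) / 2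
      omega
    have hkey : g (subV (mupV x y) ((M1 + M2 + 1) / 2)) +
        g (subV (mdnV x y) ((M1 + M2) / 2)) ≤ g (subV x M1) + g (subV y M2) := by
      rcases Nat.even_or_odd (M1 + M2) with ⟨c, hc⟩ | ⟨c, hc⟩
      · refine hg.pair_le (coneX_subV (coneX_mup hx hy) _) (coneX_subV (coneX_mdn hx hy) _)
          (coneX_subV hx _) (coneX_subV hy _) ?_ ?_
        · intro i
          show (x i + y i + 1) / 2 - (M1 + M2 + 1) / 2 ≤ (x i - M1 + (y i - M2) + 1) / 2
          omega
        · intro i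
          show (x i + y i) / 2 - (M1 + M2) / 2 ≤ (x i - M1 + (y i - M2)) / 2
          omega
      · have := hg.pair_le (a := subV (mdnV x y) ((M1 + M2) / 2))
          (b := subV (mupV x y) ((M1 + M2 + 1) / 2))
          (p := subV x M1) (q := subV y M2)
          (coneX_subV (coneX_mdn hx hy) _) (coneX_subV (coneX_mup hx hy) _)
          (coneX_subV hx _) (coneX_subV hy _) ?_ ?_
        · linarith
        · intro i
          show (x i + y i) / 2 - (M1 + M2) / 2 ≤ (x i - M1 + (y i - M2) + 1) / 2
          omega
        · intro i
          show (x i + y i + 1) / 2 - (M1 + M2 + 1) / 2 ≤ (x i - M1 + (y i - M2)) / 2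
          omega
    have hCo : (P.Co : ℝ) * ((M1 + M2 + 1) / 2 : ℕ) + P.Co * ((M1 + M2) / 2 : ℕ) =
        P.Co * M1 + P.Co * M2 := by
      have hnn : ((M1 + M2 + 1) / 2 : ℕ) + ((M1 + M2) / 2 : ℕ) = M1 + M2 := by omega
      have : (((M1 + M2 + 1) / 2 : ℕ) : ℝ) + (((M1 + M2) / 2 : ℕ) : ℝ) =
          (M1 : ℝ) + (M2 : ℝ) := by exact_mod_cast congrArg (Nat.cast (R := ℝ)) hnn
      linear_combination P.Co * this
    have hE1' : gminX N P g x = P.Co * M1 + g (subV x M1) := hE1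
    have hE2' : gminX N P g y = P.Co * M2 + g (subV y M2) := hE2
    rw [hE1', hE2']
    linarith
  · -- Lipschitz
    intro x w hx hw
    obtain ⟨Mx, hMx, hEx⟩ := Finset.exists_mem_eq_inf'
      (Finset.nonempty_range_add_one (n := x N)) (fun M => P.Co * M + g (subV x M))
    have hMxN : Mx ≤ x N := by have := Finset.mem_range.mp hMx; omega
    obtain ⟨w', hw', hsub⟩ := sub_step hx hw Mx
    have h1 : gminX N P g (x + w) ≤ P.Co * Mx + g (subV (x + w) Mx) := by
      refine hinfle _ _ ?_
      show Mx ≤ x N + w N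
      omega
    rw [hsub] at h1
    have h2 : g (subV x Mx + w') ≤ g (subV x Mx) + P.Cp :=
      hg.lip (coneX_subV hx _) hw'
    have hEx' : gminX N P g x = P.Co * Mx + g (subV x Mx) := hEx
    rw [hEx']
    linarith

lemma goodX_Vbody {N : ℕ} {P : Params} (hP : NiceP N P) {W : (ℕ → ℕ) → ℝ}
    (hW : GoodX N P W) : GoodX N P (VbodyX N P W) := by
  constructor
  · -- monotone, via unit steps
    refine mono_of_units hP.npos _ ?_
    intro x i hi hx hx'
    by_cases hi0 : i = 0
    · subst hi0
      by_cases hN1 : N = 1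
      · have hd : ∀ j, deltaX N 0 j = 1 := by
          intro j
          simp only [deltaX, hN1]
          split <;> omega
        have hsh : shV (x + deltaX N 0) = shV x := by
          funext j
          show (x (j + 1) + deltaX N 0 (j + 1)) - (x 0 + deltaX N 0 0) = x (j + 1) - x 0
          rw [hd, hd]
          omega
        simp only [VbodyX, hsh]
        have e0 : (x + deltaX N 0) 0 = x 0 + 1 := by
          show x 0 + deltaX N 0 0 = x 0 + 1
          rw [hd]
        rw [e0]
        push_cast
        nlinarith [hP.cp]
      · have hN2 : 2 ≤ N := by have := hP.npos; omega
        have hd0 : deltaX N 0 0 = 1 := by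
          simp [deltaX]
        have hdj : ∀ j, deltaX N 0 (j + 1) = 0 := by
          intro j
          simp only [deltaX]
          rw [if_neg]
          push_neg
          constructor
          · omega
          · intro h
            omega
        have hsh : shV (x + deltaX N 0) = subV (shV x) 1 := by
          funext j
          show (x (j + 1) + deltaX N 0 (j + 1)) - (x 0 + deltaX N 0 0) =
            (x (j + 1) - x 0) - 1
          rw [hd0, hdj]
          omega
        have hg1 : GbodyX N P W (shV x) ≤ GbodyX N P W (subV (shV x) 1) + P.Cp :=
          Gbody_sub1 hP hW (coneX_shV hx)
        simp only [VbodyX, hsh]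
        have e0 : (x + deltaX N 0) 0 = x 0 + 1 := by
          show x 0 + deltaX N 0 0 = x 0 + 1
          rw [hd0]
        rw [e0]
        push_cast
        linarith
    · -- i ≥ 1
      have hd0 : deltaX N i 0 = 0 := by
        simp only [deltaX]
        rw [if_neg]
        push_neg
        constructor
        · omega
        · intro h
          omega
      have hsh : shV x ≤ shV (x + deltaX N i) := by
        intro j
        show x (j + 1) - x 0 ≤ (x (j + 1) + deltaX N i (j + 1)) - (x 0 + deltaX N i 0)
        rw [hd0]
        omega
      have hmono := Gbody_mono hP hW (coneX_shV hx) (coneX_shV hx') hsh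
      simp only [VbodyX]
      have e0 : (x + deltaX N i) 0 = x 0 := by
        show x 0 + deltaX N i 0 = x 0
        rw [hd0]
        omega
      rw [e0]
      linarith
  · -- midpoint
    intro x y hx hy
    have hx0 : x 0 ≤ x 1 := hx.1 (by omega)
    have hy0 : y 0 ≤ y 1 := hy.1 (by omega)
    have hc2 : mupV x y 0 + mdnV x y 0 = x 0 + y 0 := by
      show (x 0 + y 0 + 1) / 2 + (x 0 + y 0) / 2 = x 0 + y 0
      omega
    have hc2R : ((mupV x y 0 : ℕ) : ℝ) + ((mdnV x y 0 : ℕ) : ℝ) =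
        ((x 0 : ℕ) : ℝ) + ((y 0 : ℕ) : ℝ) := by exact_mod_cast congrArg (Nat.cast (R := ℝ)) hc2
    have hCp2 : P.Cp * ((mupV x y 0 : ℕ) : ℝ) + P.Cp * ((mdnV x y 0 : ℕ) : ℝ) =
        P.Cp * x 0 + P.Cp * y 0 := by linear_combination P.Cp * hc2R
    have hpair := Gbody_pair hP hW (coneX_shV hx) (coneX_shV hy)
    rcases Nat.even_or_odd (x 0 + y 0) with ⟨c, hc⟩ | ⟨c, hc⟩
    · have e1 : shV (mupV x y) = mupV (shV x) (shV y) := by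
        funext i
        show (x (i + 1) + y (i + 1) + 1) / 2 - (x 0 + y 0 + 1) / 2 =
          ((x (i + 1) - x 0) + (y (i + 1) - y 0) + 1) / 2
        have h1 : x 0 ≤ x (i + 1) := hx.1 (by omega)
        have h2 : y 0 ≤ y (i + 1) := hy.1 (by omega)
        omega
      have e2 : shV (mdnV x y) = mdnV (shV x) (shV y) := by
        funext i
        show (x (i + 1) + y (i + 1)) / 2 - (x 0 + y 0) / 2 =
          ((x (i + 1) - x 0) + (y (i + 1) - y 0)) / 2
        have h1 : x 0 ≤ x (i + 1) := hx.1 (by omega)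
        have h2 : y 0 ≤ y (i + 1) := hy.1 (by omega)
        omega
      simp only [VbodyX, e1, e2]
      linarith
    · have e1 : shV (mupV x y) = mdnV (shV x) (shV y) := by
        funext i
        show (x (i + 1) + y (i + 1) + 1) / 2 - (x 0 + y 0 + 1) / 2 =
          ((x (i + 1) - x 0) + (y (i + 1) - y 0)) / 2
        have h1 : x 0 ≤ x (i + 1) := hx.1 (by omega)
        have h2 : y 0 ≤ y (i + 1) := hy.1 (by omega)
        omega
      have e2 : shV (mdnV x y) = mupV (shV x) (shV y) := by
        funext i
        show (x (i + 1) + y (i + 1)) / 2 - (x 0 + y 0) / 2 =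
          ((x (i + 1) - x 0) + (y (i + 1) - y 0) + 1) / 2
        have h1 : x 0 ≤ x (i + 1) := hx.1 (by omega)
        have h2 : y 0 ≤ y (i + 1) := hy.1 (by omega)
        omega
      simp only [VbodyX, e1, e2]
      linarith
  · -- Lipschitz
    intro x w hx hw
    by_cases h0 : w 0 = 1
    · have hall : ∀ j, w j = 1 := by
        intro j
        have h1 : w 0 ≤ w j := hw.2.1 (by omega)
        have h2 := hw.1 j
        omega
      have hsh : shV (x + w) = shV x := by
        funext j
        show (x (j + 1) + w (j + 1)) - (x 0 + w 0) = x (j + 1) - x 0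
        rw [hall, h0]
        omega
      simp only [VbodyX, hsh]
      have e0 : (x + w) 0 = x 0 + 1 := by
        show x 0 + w 0 = x 0 + 1
        rw [h0]
      rw [e0]
      push_cast
      linarith
    · have h00 : w 0 = 0 := by have := hw.1 0; omega
      have hwUp : StepX N (fun j => w (j + 1)) := by
        refine ⟨fun i => hw.1 _, fun i j hij => hw.2.1 (by omega), ?_⟩
        intro i hi
        dsimp only
        rw [hw.2.2 (i + 1) (by omega), hw.2.2 (N - 1 + 1) (by omega)]
      have hsh : shV (x + w) = shV x + (fun j => w (j + 1)) := by
        funext j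
        show (x (j + 1) + w (j + 1)) - (x 0 + w 0) = (x (j + 1) - x 0) + w (j + 1)
        rw [h00]
        have h1 : x 0 ≤ x (j + 1) := hx.1 (by omega)
        omega
      have hlip := Gbody_lip hP hW (coneX_shV hx) hwUp
      simp only [VbodyX, hsh]
      have e0 : (x + w) 0 = x 0 := by
        show x 0 + w 0 = x 0
        omega
      rw [e0]
      linarith

lemma goodX_gWX {N : ℕ} {P : Params} (hP : NiceP N P) : ∀ t, GoodX N P (gWX N P t) := by
  intro t
  induction t with
  | zero =>
      constructor
      · intro x y _ _ _
        exact le_refl 0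
      · intro x y _ _
        simp only [gWX]
        norm_num
      · intro x w _ _
        simp only [gWX]
        linarith [hP.cp]
  | succ t ih =>
      have hV := goodX_Vbody hP ih
      have hm := goodX_gmin hP hV
      have hpa1 : (0 : ℝ) ≤ 1 - P.pa := by linarith [hP.pa1]
      constructor
      · intro x y hx hy hxy
        have t1 := mul_le_mul_of_nonneg_left (hm.mono hx hy hxy) hP.pa0
        have t2 := mul_le_mul_of_nonneg_left (hV.mono hx hy hxy) hpa1
        simp only [gWX]
        linarith
      · intro x y hx hy
        have t1 := mul_le_mul_of_nonneg_left (hm.mid hx hy) hP.pa0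
        have t2 := mul_le_mul_of_nonneg_left (hV.mid hx hy) hpa1
        simp only [gWX]
        nlinarith [t1, t2]
      · intro x w hx hw
        have t1 := mul_le_mul_of_nonneg_left (hm.lip hx hw) hP.pa0
        have t2 := mul_le_mul_of_nonneg_left (hV.lip hx hw) hpa1
        simp only [gWX]
        nlinarith [t1, t2]

/-! #### Bridge: cumulative coordinates of states -/

variable {N : ℕ}

/-- Cumulative coordinates of a state. -/
def cumul (s : Fin N → ℕ) : ℕ → ℕ := fun i => S s (i + 1)

lemma S_zero (s : Fin N → ℕ) : S s 0 = 0 := by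
  simp [S]

lemma S_succ (s : Fin N → ℕ) {m : ℕ} (hm : m < N) :
    S s (m + 1) = S s m + s ⟨m, hm⟩ := by
  rw [S, S]
  have hins : (Finset.univ.filter fun i : Fin N => (i : ℕ) < m + 1) =
      insert ⟨m, hm⟩ (Finset.univ.filter fun i : Fin N => (i : ℕ) < m) := by
    ext j
    simp only [Finset.mem_filter, Finset.mem_univ, true_and, Finset.mem_insert, Fin.ext_iff]
    omega
  rw [hins, Finset.sum_insert (by simp)]
  exact add_comm _ _

lemma S_stable (s : Fin N → ℕ) {m : ℕ} (hm : N ≤ m) : S s m = S s N := by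
  rw [S, S]
  apply Finset.sum_congr _ (fun _ _ => rfl)
  ext j
  simp only [Finset.mem_filter, Finset.mem_univ, true_and]
  have := j.isLt
  omega

lemma S_mono (s : Fin N → ℕ) : Monotone (S s) := by
  intro a b hab
  rw [S, S]
  apply Finset.sum_le_sum_of_subset
  intro j hj
  simp only [Finset.mem_filter, Finset.mem_univ, true_and] at *
  omega

lemma S_eq_zero_iff (s : Fin N → ℕ) (m : ℕ) :
    S s m = 0 ↔ ∀ j : Fin N, (j : ℕ) < m → s j = 0 := by
  rw [S, Finset.sum_eq_zero_iff]
  constructor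
  · intro h j hj
    exact h j (by simp only [Finset.mem_filter, Finset.mem_univ, true_and]; exact hj)
  · intro h j hj
    simp only [Finset.mem_filter, Finset.mem_univ, true_and] at hj
    exact h j hj

lemma coneX_cumul (s : Fin N → ℕ) : ConeX N (cumul s) := by
  constructor
  · intro i j hij
    exact S_mono s (by omega)
  · intro i hi
    show S s (i + 1) = S s (N - 1 + 1)
    rw [S_stable s (m := i + 1) (by omega), S_stable s (m := N - 1 + 1) (by omega)]

lemma tot_eq_cumul (s : Fin N → ℕ) : tot s = cumul s N := by
  show S s N = S s (N + 1)
  rw [S_stable s (m := N + 1) (by omega)]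

lemma cumul_offload (s : Fin N → ℕ) (L : ℕ) :
    cumul (offload s L) = subV (cumul s) L := by
  have key : ∀ m, S (offload s L) m = S s m - L := by
    intro m
    induction m with
    | zero => rw [S_zero, S_zero]; omega
    | succ m ih =>
        rcases lt_or_ge m N with hm | hm
        · rw [S_succ _ hm, S_succ _ hm, ih]
          have hmono : S s m ≤ S s (m + 1) := S_mono s (by omega)
          have hoff : offload s L ⟨m, hm⟩ = (S s (m + 1) - L) - (S s m - L) := rfl
          rw [hoff, S_succ _ hm]
          omega
        · rw [S_stable _ (m := m + 1) (by omega), S_stable s (m := m + 1) (by omega)]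
          rw [S_stable _ (m := m) (by omega), S_stable s (m := m) (by omega)] at ih
          exact ih
  funext i
  exact key (i + 1)

lemma cumul_shift (hN : 0 < N) (s : Fin N → ℕ) : cumul (shift s) = shV (cumul s) := by
  have key : ∀ i, S (shift s) (i + 1) = S s (i + 2) - S s 1 := by
    intro i
    induction i with
    | zero =>
        show S (shift s) (0 + 1) = S s 2 - S s 1
        rw [S_succ _ hN, S_zero]
        have hsh : shift s ⟨0, hN⟩ = if h : 1 < N then s ⟨1, h⟩ else 0 := rfl
        rw [hsh]
        split_ifs with h1
        · rw [S_succ s (m := 1) h1, S_succ s (m := 0) (by omega), S_zero]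
          omega
        · have e1 : S s 2 = S s N := S_stable s (by omega)
          have e2 : S s 1 = S s N := S_stable s (by omega)
          omega
    | succ i ih =>
        show S (shift s) (i + 1 + 1) = S s (i + 3) - S s 1
        rcases lt_or_ge (i + 1) N with hm | hm
        · rw [S_succ _ hm, ih]
          have hsh : shift s ⟨i + 1, hm⟩ = if h : i + 2 < N then s ⟨i + 2, h⟩ else 0 := rfl
          rw [hsh]
          have hmono : S s 1 ≤ S s (i + 2) := S_mono s (by omega)
          split_ifs with h2
          · rw [S_succ s (m := i + 2) h2]
            omega
          · rw [S_stable s (m := i + 3) (by omega), S_stable s (m := i + 2) (by omega)]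
            omega
        · have e1 : S (shift s) (i + 1 + 1) = S (shift s) N := S_stable _ (by omega)
          have e2 : S (shift s) (i + 1) = S (shift s) N := S_stable _ (by omega)
          have e3 : S s (i + 3) = S s N := S_stable s (by omega)
          have e4 : S s (i + 2) = S s N := S_stable s (by omega)
          omega
  funext i
  exact key i

lemma cumul_add_avec (s : Fin N → ℕ) {k : ℕ} (hk : k ≤ N) :
    cumul (fun i => s i + avec k i) = cumul s + cvv k := by
  have keyA : ∀ m, S (avec k : Fin N → ℕ) m = if 1 ≤ k ∧ k ≤ min m N then 1 else 0 := by
    intro m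
    rcases Nat.eq_zero_or_pos k with hk0 | hk1
    · subst hk0
      have : (avec 0 : Fin N → ℕ) = fun _ => 0 := by
        funext j
        simp [avec]
      rw [this]
      simp [S]
    · have hkN' : k - 1 < N := by omega
      have havec : ∀ j : Fin N, (avec k : Fin N → ℕ) j = if j = ⟨k - 1, hkN'⟩ then 1 else 0 := by
        intro j
        simp only [avec, Fin.ext_iff]
        split_ifs with c1 c2 c3 <;> omega
      rw [S]
      rw [Finset.sum_congr rfl (fun j _ => havec j)]
      rw [Finset.sum_ite_eq' _ (⟨k - 1, hkN'⟩ : Fin N) (fun _ => 1)]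
      simp only [Finset.mem_filter, Finset.mem_univ, true_and]
      split_ifs with c1 c2 c3 <;> simp_all <;> omega
  have keyS : ∀ m, S (fun j => s j + avec k j) m = S s m + S (avec k : Fin N → ℕ) m := by
    intro m
    rw [S, S, S, ← Finset.sum_add_distrib]
  funext i
  show S (fun j => s j + avec k j) (i + 1) = S s (i + 1) + cvv k i
  rw [keyS, keyA]
  have : cvv k i = if 1 ≤ k ∧ k ≤ min (i + 1) N then 1 else 0 := by
    simp only [cvv]
    split_ifs with c1 c2 <;> omega
  rw [this]

lemma cumul_proc (s : Fin N → ℕ) : cumul (proc s) = subV (cumul s) 1 := by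
  have key : ∀ m, S (proc s) m = S s m - 1 := by
    intro m
    induction m with
    | zero => rw [S_zero, S_zero]
    | succ m ih =>
        rcases lt_or_ge m N with hm | hm
        · rw [S_succ _ hm, S_succ _ hm, ih]
          have hproc : proc s ⟨m, hm⟩ =
              if s ⟨m, hm⟩ ≠ 0 ∧ ∀ j : Fin N, j < ⟨m, hm⟩ → s j = 0
              then s ⟨m, hm⟩ - 1 else s ⟨m, hm⟩ := rfl
          rw [hproc]
          split_ifs with hc
          · have h0 : S s m = 0 := by
              rw [S_eq_zero_iff]
              intro j hj
              exact hc.2 j (by rw [Fin.lt_def]; exact hj)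
            omega
          · by_cases hsm : s ⟨m, hm⟩ = 0
            · omega
            · have hS1 : S s m ≠ 0 := by
                intro h0
                apply hc
                refine ⟨hsm, ?_⟩
                intro j hj
                rw [Fin.lt_def] at hj
                exact (S_eq_zero_iff s m).mp h0 j hj
              omega
        · rw [S_stable _ (m := m + 1) (by omega), S_stable s (m := m + 1) (by omega)]
          rw [S_stable _ (m := m) (by omega), S_stable s (m := m) (by omega)] at ih
          exact ih
  funext i
  exact key (i + 1)

lemma cumul_sdd (hN : 0 < N) (s : Fin N → ℕ) (L : ℕ) {k : ℕ} (hk : k ≤ N) :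
    cumul (sdd s L k) = shV (subV (cumul s) L) + cvv k := by
  have h1 : cumul (sdd s L k) = cumul (shift (offload s L)) + cvv k :=
    cumul_add_avec _ hk
  rw [h1, cumul_shift hN, cumul_offload]

lemma cumul_sd (hN : 0 < N) (s : Fin N → ℕ) (L : ℕ) {k : ℕ} (hk : k ≤ N) :
    cumul (sd s L k) = subV (shV (subV (cumul s) L) + cvv k) 1 := by
  have h1 : cumul (sd s L k) = subV (cumul (sdd s L k)) 1 := cumul_proc _
  rw [h1, cumul_sdd hN s L hk]

lemma subV_zero (x : ℕ → ℕ) : subV x 0 = x := by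
  funext i
  show x i - 0 = x i
  omega

lemma inf'_affine (n : ℕ) (f : ℕ → ℝ) (c a : ℝ) (ha : 0 ≤ a)
    (H H' : (Finset.range (n + 1)).Nonempty) :
    (Finset.range (n + 1)).inf' H (fun L => a * f L + c)
      = a * (Finset.range (n + 1)).inf' H' f + c := by
  apply le_antisymm
  · obtain ⟨M, hM, hE⟩ := Finset.exists_mem_eq_inf' H' f
    have h1 : (Finset.range (n + 1)).inf' H (fun L => a * f L + c) ≤ a * f M + c :=
      Finset.inf'_le _ hM
    rw [hE]
    exact h1
  · apply Finset.le_inf'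
    intro L hL
    have h1 : (Finset.range (n + 1)).inf' H' f ≤ f L := Finset.inf'_le _ hL
    have := mul_le_mul_of_nonneg_left h1 ha
    linarith

/-- Bridge for `GA`. -/
lemma GA_eq_Gbody (P : Params) (hP : NiceP N P) :
    ∀ t (s : Fin N → ℕ) L,
      GA P t s L = GbodyX N P (gWX N P t) (shV (subV (cumul s) L)) := by
  have hN : 0 < N := hP.npos
  intro t
  induction t with
  | zero =>
      intro s L
      simp only [GA, GbodyX, gWX]
      symm
      refine Finset.sum_eq_zero ?_
      intro k hk
      ring
  | succ t ih =>
      have E1 : ∀ y : Fin N → ℕ, JofG P (GA P t) y = gWX N P (t + 1) (cumul y) := by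
        intro y
        have hterm : ∀ L : ℕ,
            cost P y L + P.pa * GA P t y L + (1 - P.pa) * GA P t y 0
            = P.pa * ((fun M => P.Co * M +
                VbodyX N P (gWX N P t) (subV (cumul y) M)) L)
              + (1 - P.pa) * VbodyX N P (gWX N P t) (cumul y) := by
          intro L
          rw [cost, costA, costNA, ih y L, ih y 0, subV_zero]
          simp only [VbodyX]
          have e0 : (subV (cumul y) L) 0 = S y 1 - L := rfl
          have e1 : cumul y 0 = S y 1 := rfl
          rw [e0, e1]
          ring
        have hfun : (fun L => cost P y L + P.pa * GA P t y L + (1 - P.pa) * GA P t y 0)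
            = fun L => P.pa * ((fun M => P.Co * M +
                VbodyX N P (gWX N P t) (subV (cumul y) M)) L)
              + (1 - P.pa) * VbodyX N P (gWX N P t) (cumul y) := funext hterm
        have hto : tot y = cumul y N := tot_eq_cumul y
        rw [JofG, hfun]
        simp only [hto]
        rw [inf'_affine (cumul y N)
          (fun M => P.Co * M + VbodyX N P (gWX N P t) (subV (cumul y) M))
          ((1 - P.pa) * VbodyX N P (gWX N P t) (cumul y)) P.pa hP.pa0
          _ Finset.nonempty_range_add_one]
        simp only [gWX, gminX]
      intro s L
      simp only [GA]
      have hA : ∀ k ∈ Finset.range (N + 1),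
          P.p k * JofG P (GA P t) (sd s L k)
          = P.p k * gWX N P (t + 1) (subV (shV (subV (cumul s) L) + cvv k) 1) := by
        intro k hk
        have hkN : k ≤ N := by have := Finset.mem_range.mp hk; omega
        rw [E1, cumul_sd hN s L hkN]
      have hB : ∀ k ∈ Finset.range (N + 1),
          P.p k * JofG P (GA P t) (sdd s L k)
          = P.p k * gWX N P (t + 1) (shV (subV (cumul s) L) + cvv k) := by
        intro k hk
        have hkN : k ≤ N := by have := Finset.mem_range.mp hk; omega
        rw [E1, cumul_sdd hN s L hkN]
      rw [Finset.sum_congr rfl hA, Finset.sum_congr rfl hB]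
      rw [GbodyX, Finset.mul_sum, Finset.mul_sum, ← Finset.sum_add_distrib]
      refine Finset.sum_congr rfl ?_
      intro k hk
      ring

/-- Bridge for `JA`. -/
lemma JA_eq (P : Params) (hP : NiceP N P) (T : ℕ) (s : Fin N → ℕ) (L : ℕ) :
    JA P T s L = P.Co * L + VbodyX N P (gWX N P (T - 1)) (subV (cumul s) L) := by
  rw [JA, costA, GA_eq_Gbody P hP (T - 1) s L]
  simp only [VbodyX]
  have e0 : (subV (cumul s) L) 0 = S s 1 - L := rfl
  rw [e0]
  ring

end AuxDev

/-- if s^a is adjacent to s and L*_T(s) ≥ 1 then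
L*_T(s^a) = L*_T(s) + 1. -/
theorem Lstar_adjacent_succ {N : ℕ} (hN : 1 ≤ N)
    (P : Params) (hCo : 0 < P.Co) (hCoCp : P.Co < P.Cp)
    (hpa0 : 0 ≤ P.pa) (hpa1 : P.pa ≤ 1) (hmu0 : 0 ≤ P.mu) (hmu1 : P.mu ≤ 1)
    (hp : ∀ k ≤ N, 0 ≤ P.p k) (hpsum : ∑ k ∈ Finset.range (N + 1), P.p k = 1)
    (T : ℕ) (hT : 1 ≤ T) (s sa : Fin N → ℕ) (hadj : Adjacent s sa)
    (h1 : 1 ≤ Lstar P T s) :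
    Lstar P T sa = Lstar P T s + 1 := by
  have hP : NiceP N P := ⟨hN, le_of_lt hCo, by linarith, hpa0, hpa1, hmu0, hmu1, hp, hpsum⟩
  set g := VbodyX N P (gWX N P (T - 1)) with hgdef
  have hg : GoodX N P g := goodX_Vbody hP (goodX_gWX hP (T - 1))
  have hJA : ∀ (u : Fin N → ℕ) (L : ℕ),
      JA P T u L = P.Co * L + g (subV (cumul u) L) := fun u L => JA_eq P hP T u L
  -- the minimizer set of s
  set Ms : Set ℕ := {L | L ≤ tot s ∧ ∀ L' ≤ tot s, JA P T s L ≤ JA P T s L'} with hMs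
  have hLs : Lstar P T s = sInf Ms := rfl
  have hMne : Ms.Nonempty := by
    obtain ⟨L0, hL0, hmin⟩ := Finset.exists_min_image (Finset.range (tot s + 1))
      (JA P T s) ⟨0, Finset.mem_range.mpr (by omega)⟩
    refine ⟨L0, ⟨by have := Finset.mem_range.mp hL0; omega, ?_⟩⟩
    intro L' hL'
    exact hmin L' (Finset.mem_range.mpr (by omega))
  have hmem : Lstar P T s ∈ Ms := by
    rw [hLs]
    exact Nat.sInf_mem hMne
  -- rule out the `s = 0` branch of adjacency
  rcases hadj with ⟨hs0, jj, hj1, hjd, hsa⟩ | ⟨hs0, _⟩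
  swap
  · exfalso
    have htot0 : tot s = 0 := by
      rw [hs0]
      simp [tot, S]
    have h0m : (0 : ℕ) ∈ Ms := by
      constructor
      · omega
      · intro L' hL'
        have : L' = 0 := by omega
        rw [this]
    have : Lstar P T s ≤ 0 := by
      rw [hLs]
      exact Nat.sInf_le h0m
    omega
  -- main branch
  set x := cumul s with hxdef
  have hxcone : ConeX N x := coneX_cumul s
  have htotpos : 0 < tot s := by
    rcases Nat.eq_zero_or_pos (tot s) with h0 | h0
    · exfalso
      apply hs0
      funext i
      exact (S_eq_zero_iff s N).mp h0 i i.isLt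
    · exact h0
  have hjN : jj ≤ N := by
    have hdN : dmin s ≤ N := Nat.sInf_le (by simp only [Set.mem_setOf_eq]; exact htotpos)
    omega
  have hbelow : ∀ m, m < jj → S s m = 0 := by
    intro m hm
    by_contra hne
    have hd : dmin s ≤ m := Nat.sInf_le (by simp only [Set.mem_setOf_eq]; omega)
    omega
  have hcvstep : StepX N (cvv jj) := stepX_cvv hjN
  have hcum_sa : cumul sa = x + cvv jj := by
    rw [hsa]
    exact cumul_add_avec s hjN
  have hKeyA : ∀ L, subV (cumul sa) (L + 1) = subV x L := by
    intro L
    rw [hcum_sa]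
    funext i
    show (x i + cvv jj i) - (L + 1) = x i - L
    by_cases hii : jj ≤ i + 1
    · have : cvv jj i = 1 := by
        simp only [cvv]
        rw [if_pos ⟨hj1, hii⟩]
      omega
    · have h0 : cvv jj i = 0 := by
        simp only [cvv]
        rw [if_neg (by omega)]
      have hx0 : x i = 0 := hbelow (i + 1) (by omega)
      omega
  have htot_sa : tot sa = tot s + 1 := by
    rw [tot_eq_cumul, tot_eq_cumul, hcum_sa]
    show x N + cvv jj N = x N + 1
    have : cvv jj N = 1 := by
      simp only [cvv]
      rw [if_pos ⟨hj1, by omega⟩]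
    omega
  have hJAsucc : ∀ L, JA P T sa (L + 1) = JA P T s L + P.Co := by
    intro L
    rw [hJA, hJA, hKeyA L]
    push_cast
    ring
  have hJAsa0 : JA P T sa 0 = g (x + cvv jj) := by
    rw [hJA, subV_zero, hcum_sa]
    norm_num
  -- abbreviations
  set Lt := Lstar P T s with hLt
  have hLtot : Lt ≤ tot s := hmem.1
  have hminLt : ∀ L' ≤ tot s, JA P T s Lt ≤ JA P T s L' := hmem.2
  -- strict inequality at Lt - 1
  have hstrict : JA P T s Lt < JA P T s (Lt - 1) := by
    have hnm : (Lt - 1) ∉ Ms := by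
      apply Nat.notMem_of_lt_sInf
      rw [← hLs]
      omega
    by_contra hcon
    push_neg at hcon
    apply hnm
    constructor
    · omega
    · intro L' hL'
      exact le_trans hcon (hminLt L' hL')
  -- translate to g
  have hcastL : ((Lt - 1 : ℕ) : ℝ) = (Lt : ℝ) - 1 := by
    have : (1 : ℕ) ≤ Lt := h1
    push_cast [this]
    ring
  have h_b : g (subV x (Lt - 1)) > g (subV x Lt) + P.Co := by
    have e1 := hJA s Lt
    have e2 := hJA s (Lt - 1)
    rw [e1, e2, hcastL] at hstrict
    linarith
  have h_c : P.Co * (Lt : ℝ) + g (subV x Lt) ≤ g x := by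
    have := hminLt 0 (by omega)
    rw [hJA, hJA, subV_zero] at this
    push_cast at this
    linarith
  have h_a : g (subV x Lt + cvv jj) + g x ≤ g (x + cvv jj) + g (subV x Lt) :=
    hg.marg_chain hxcone hcvstep Lt
  have h_a2 : g (subV x (Lt - 1)) ≤ g (subV x Lt + cvv jj) := by
    obtain ⟨w', hw', hw'1, hsubs⟩ := sub_succ_step hxcone (Lt - 1)
    have hL1 : Lt - 1 + 1 = Lt := by omega
    rw [hL1] at hsubs hw'1
    have hle : w' ≤ cvv jj := by
      intro i
      show w' i ≤ cvv jj i
      have hiff := hw'1 i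
      have hb1 := hw'.1 i
      by_cases hii : jj ≤ i + 1
      · have : cvv jj i = 1 := by
          simp only [cvv]
          rw [if_pos ⟨hj1, hii⟩]
        omega
      · have h0 : cvv jj i = 0 := by
          simp only [cvv]
          rw [if_neg (by omega)]
        have hx0 : x i = 0 := hbelow (i + 1) (by omega)
        omega
    rw [hsubs]
    refine hg.mono (coneX_add_step (coneX_subV hxcone Lt) hw')
      (coneX_add_step (coneX_subV hxcone Lt) hcvstep) ?_
    intro i
    show subV x Lt i + w' i ≤ subV x Lt i + cvv jj i
    have hwi : w' i ≤ cvv jj i := hle i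
    omega
  -- the crucial strict comparison
  have hmain : JA P T sa (Lt + 1) < JA P T sa 0 := by
    rw [hJAsa0, hJAsucc, hJA]
    linarith
  -- the minimizer set of sa
  set Msa : Set ℕ := {L | L ≤ tot sa ∧ ∀ L' ≤ tot sa, JA P T sa L ≤ JA P T sa L'} with hMsa
  have hLsa : Lstar P T sa = sInf Msa := rfl
  have claim1 : Lt + 1 ∈ Msa := by
    constructor
    · omega
    · intro L' hL'
      match L' with
      | 0 => exact le_of_lt hmain
      | (L'' + 1) =>
          rw [hJAsucc, hJAsucc]
          have : JA P T s Lt ≤ JA P T s L'' := hminLt L'' (by omega)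
          linarith
  have claim2 : ∀ e ∈ Msa, Lt + 1 ≤ e := by
    intro e he
    match e with
    | 0 =>
        exfalso
        have := he.2 (Lt + 1) (by omega)
        linarith
    | (e'' + 1) =>
        have hmem'' : e'' ∈ Ms := by
          constructor
          · have := he.1
            omega
          · intro L' hL'
            have h2 := he.2 (L' + 1) (by omega)
            rw [hJAsucc, hJAsucc] at h2
            linarith
        have : sInf Ms ≤ e'' := Nat.sInf_le hmem''
        rw [← hLs] at this
        omega
  rw [hLsa]
  exact le_antisymm (Nat.sInf_le claim1) (le_csInf ⟨_, claim1⟩ claim2)
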